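/- Let (K, val) be a valued field in which every strict unit admits a square root, with a fixed pseudo-angular component map p.an. If x₁, x₂ ∈ Kˣ satisfy val(x₁) = val(x₂) and p.an(x₁) = p.an(x₂), then x₂ = x₁u² for some unit u of the valuation ring B with π(u²) = 1. Consequently, if instead p.an(x₁) + p.an(x₂) = 0, then val(x₁ + x₂) > val(x₁). -/

import Mathlib

/-! Equal value and equal `pan` make `x₂ / x₁` a square `u²` by axiom (5); comparing values and
applying axiom (2) to `x₂ = u² x₁` forces `val u = 1` and `π (u²) = 1`. For the second claim apply
this to `-x₁` and `x₂`: then `x₁ + x₂ = x₁ (1 - u²)` with `π (1 - u²) = 0`, so `1 - u²` lies in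
the maximal ideal and has value `> 1`. -/

/-- A (multiplicatively written) valuation on a field `K` with value group `G`:
`v` is multiplicative and satisfies the ultrametric inequality on nonzero elements,
and is surjective onto `G`.  The value at `0` is irrelevant (the paper's `∞`). -/
structure MulValuation (K : Type*) [Field K] (G : Type*) [CommGroup G] [LinearOrder G] [IsOrderedMonoid G] where
  v : K → G
  map_mul : ∀ ⦃x y : K⦄, x ≠ 0 → y ≠ 0 → v (x * y) = v x * v y
  min_le_map_add : ∀ ⦃x y : K⦄, x ≠ 0 → y ≠ 0 → x + y ≠ 0 → min (v x) (v y) ≤ v (x + y)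
  surj : ∀ g : G, ∃ x : K, x ≠ 0 ∧ v x = g

namespace MulValuation

variable {K : Type*} [Field K] {G : Type*} [CommGroup G] [LinearOrder G] [IsOrderedMonoid G]

/-- The valuation ring `B = {x : val x ≥ e} ∪ {0}`, as a set. -/
def ringSet (V : MulValuation K G) : Set K := {x : K | x = 0 ∨ 1 ≤ V.v x}

/-- `val(Aˣ)`: the set of values of units of a subring `A` of `K`. -/
def unitVals (V : MulValuation K G) (A : Subring K) : Set G :=
  {g : G | ∃ x : K, x ≠ 0 ∧ x ∈ A ∧ x⁻¹ ∈ A ∧ V.v x = g}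

end MulValuation

/-- `π : K → F` is a residue homomorphism for `V`: it is a surjective ring
homomorphism on the valuation ring, whose nonvanishing locus on the valuation ring
is exactly the set of units of the valuation ring. -/
def MulValuation.IsResidue {K : Type*} [Field K] {G : Type*} [CommGroup G] [LinearOrder G] [IsOrderedMonoid G]
    {F : Type*} [Field F] (V : MulValuation K G) (π : K → F) : Prop :=
  π 0 = 0 ∧ π 1 = 1 ∧
  (∀ x y : K, x ∈ V.ringSet → y ∈ V.ringSet → π (x + y) = π x + π y) ∧
  (∀ x y : K, x ∈ V.ringSet → y ∈ V.ringSet → π (x * y) = π x * π y) ∧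
  (∀ x : K, x ≠ 0 → x ∈ V.ringSet → (π x ≠ 0 ↔ V.v x = 1)) ∧
  (∀ c : F, ∃ x ∈ V.ringSet, π x = c)

/-- `pan` is a pseudo-angular component map for `V` (with residue map `π`),
i.e. it satisfies conditions (1)-(6) of the paper (stated on nonzero elements). -/
def MulValuation.IsPseudoAngular {K : Type*} [Field K] {G : Type*} [CommGroup G] [LinearOrder G] [IsOrderedMonoid G]
    {F : Type*} [Field F] (V : MulValuation K G) (π : K → F) (pan : K → F) : Prop :=
  (∀ x : K, x ≠ 0 → pan x ≠ 0) ∧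
  (∀ u : K, u ≠ 0 → V.v u = 1 → pan u = π u) ∧
  (∀ u x : K, u ≠ 0 → V.v u = 1 → x ≠ 0 → pan (u * x) = π u * pan x) ∧
  (∀ (g : G) (c : F), c ≠ 0 → ∃ w : K, w ≠ 0 ∧ V.v w = g ∧ pan w = c) ∧
  (∀ x₁ x₂ : K, x₁ ≠ 0 → x₂ ≠ 0 → x₁ + x₂ ≠ 0 →
    (V.v x₁ < V.v x₂ → pan (x₁ + x₂) = pan x₁) ∧
    (V.v x₁ = V.v x₂ → pan x₁ + pan x₂ ≠ 0 →
      V.v (x₁ + x₂) = V.v x₁ ∧ pan (x₁ + x₂) = pan x₁ + pan x₂)) ∧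
  (∀ x y : K, x ≠ 0 → y ≠ 0 → (∃ u : G, V.v x * (V.v y)⁻¹ = u ^ 2) → pan x = pan y →
    ∃ u : K, u ≠ 0 ∧ y = u ^ 2 * x) ∧
  (∀ a u : K, a ≠ 0 → u ≠ 0 → ∃ k : F, k ≠ 0 ∧ pan (a * u ^ 2) = pan a * k ^ 2)

namespace MulValuation

variable {K : Type*} [Field K] {G : Type*} [CommGroup G] [LinearOrder G] [IsOrderedMonoid G]

section Valuation

variable (V : MulValuation K G)

theorem v_one : V.v 1 = 1 := by
  have h := V.map_mul (one_ne_zero (α := K)) one_ne_zero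
  rw [mul_one] at h
  exact left_eq_mul.mp h

theorem v_sq {x : K} (hx : x ≠ 0) : V.v (x ^ 2) = V.v x ^ 2 := by
  rw [sq, sq, V.map_mul hx hx]

theorem v_neg_one : V.v (-1) = 1 :=
  sq_eq_one.mp (by rw [← V.v_sq (neg_ne_zero.2 one_ne_zero), neg_one_sq, V.v_one])

theorem v_neg {x : K} (hx : x ≠ 0) : V.v (-x) = V.v x := by
  rw [← neg_one_mul, V.map_mul (neg_ne_zero.2 one_ne_zero) hx, v_neg_one, one_mul]

theorem mem_ringSet_of_v_eq_one {x : K} (hx : V.v x = 1) : x ∈ V.ringSet :=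
  Or.inr hx.ge

end Valuation

variable {V : MulValuation K G} {F : Type*} [Field F] {π : K → F}

namespace IsResidue

theorem map_neg_one (hπ : V.IsResidue π) : π (-1) = -1 := by
  have h := hπ.2.2.1 (-1) 1 (V.mem_ringSet_of_v_eq_one V.v_neg_one)
    (V.mem_ringSet_of_v_eq_one V.v_one)
  rw [neg_add_cancel, hπ.1, hπ.2.1] at h
  linear_combination -h

theorem one_lt_v_of_map_eq_zero (hπ : V.IsResidue π) {x : K} (hx : x ≠ 0)
    (hmem : x ∈ V.ringSet) (h0 : π x = 0) : 1 < V.v x := by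
  refine lt_of_le_of_ne (hmem.resolve_left hx) fun h => ?_
  exact (hπ.2.2.2.2.1 x hx hmem).mpr h.symm h0

theorem one_lt_v_one_sub (hπ : V.IsResidue π) {w : K} (hw : V.v w = 1) (hπw : π w = 1)
    (hsub : 1 - w ≠ 0) : 1 < V.v (1 - w) := by
  have hw0 : w ≠ 0 := by
    rintro rfl
    exact zero_ne_one (hπ.1.symm.trans hπw)
  have hnw : V.v (-w) = 1 := (V.v_neg hw0).trans hw
  have hmem : 1 - w ∈ V.ringSet := by
    have h := V.min_le_map_add one_ne_zero (neg_ne_zero.2 hw0) (by rwa [← sub_eq_add_neg])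
    rw [V.v_one, hnw, min_self, ← sub_eq_add_neg] at h
    exact Or.inr h
  have hπnw : π (-w) = -1 := by
    rw [← neg_one_mul, hπ.2.2.2.1 _ _ (V.mem_ringSet_of_v_eq_one V.v_neg_one)
      (V.mem_ringSet_of_v_eq_one hw), hπ.map_neg_one, hπw, mul_one]
  refine hπ.one_lt_v_of_map_eq_zero hsub hmem ?_
  rw [sub_eq_add_neg, hπ.2.2.1 _ _ (V.mem_ringSet_of_v_eq_one V.v_one)
    (V.mem_ringSet_of_v_eq_one hnw), hπ.2.1, hπnw, add_neg_cancel]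

end IsResidue

namespace IsPseudoAngular

variable {pan : K → F}

theorem pan_neg (hpan : V.IsPseudoAngular π pan) (hπ : V.IsResidue π) {x : K} (hx : x ≠ 0) :
    pan (-x) = -pan x := by
  rw [← neg_one_mul, hpan.2.2.1 _ _ (neg_ne_zero.2 one_ne_zero) V.v_neg_one hx,
    hπ.map_neg_one, neg_one_mul]

theorem exists_eq_mul_sq_of_pan_eq (hpan : V.IsPseudoAngular π pan) {a b : K} (ha : a ≠ 0)
    (hb : b ≠ 0) (hv : V.v a = V.v b) (hp : pan a = pan b) :
    ∃ u : K, u ≠ 0 ∧ V.v u = 1 ∧ π (u ^ 2) = 1 ∧ b = a * u ^ 2 := by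
  obtain ⟨u, hu0, hb_eq⟩ :=
    hpan.2.2.2.2.2.1 a b ha hb ⟨1, by rw [hv, mul_inv_cancel, one_pow]⟩ hp
  have hu2 : u ^ 2 ≠ 0 := pow_ne_zero 2 hu0
  have hvu2 : V.v (u ^ 2) = 1 := by
    have h := V.map_mul hu2 ha
    rw [← hb_eq, ← hv] at h
    exact left_eq_mul.mp (h.trans (mul_comm _ _))
  have hπu2 : π (u ^ 2) = 1 := by
    have h := hpan.2.2.1 _ _ hu2 hvu2 ha
    rw [← hb_eq, ← hp] at h
    exact (mul_eq_right₀ (hpan.1 a ha)).mp h.symm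
  exact ⟨u, hu0, sq_eq_one.mp (by rwa [← V.v_sq hu0]), hπu2, by rw [hb_eq, mul_comm]⟩

end IsPseudoAngular

end MulValuation

open MulValuation

theorem stmt10_general {K : Type*} [Field K] {G : Type*} [CommGroup G] [LinearOrder G] [IsOrderedMonoid G]
    {F : Type*} [Field F] (V : MulValuation K G) (π : K → F)
    (hres : V.IsResidue π)
    (pan : K → F) (hpan : V.IsPseudoAngular π pan)
    (x₁ x₂ : K) (h1 : x₁ ≠ 0) (h2 : x₂ ≠ 0) (hv : V.v x₁ = V.v x₂) :
    (pan x₁ = pan x₂ →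
      ∃ u : K, u ≠ 0 ∧ V.v u = 1 ∧ π (u ^ 2) = 1 ∧ x₂ = x₁ * u ^ 2) ∧
    (pan x₁ + pan x₂ = 0 → x₁ + x₂ = 0 ∨ V.v x₁ < V.v (x₁ + x₂)) := by
  refine ⟨hpan.exists_eq_mul_sq_of_pan_eq h1 h2 hv, fun hsum => ?_⟩
  by_cases hz : x₁ + x₂ = 0
  · exact Or.inl hz
  obtain ⟨u, hu0, hvu, hπu, hx₂⟩ :=
    hpan.exists_eq_mul_sq_of_pan_eq (neg_ne_zero.2 h1) h2 ((V.v_neg h1).trans hv)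
      (by rw [hpan.pan_neg hres h1]; linear_combination -hsum)
  have hsplit : x₁ + x₂ = x₁ * (1 - u ^ 2) := by rw [hx₂]; ring
  have hsub : 1 - u ^ 2 ≠ 0 := fun h => hz (by rw [hsplit, h, mul_zero])
  have hvu2 : V.v (u ^ 2) = 1 := by rw [V.v_sq hu0, hvu, one_pow]
  rw [hsplit, V.map_mul h1 hsub]
  exact Or.inr (lt_mul_of_one_lt_right' _ (hres.one_lt_v_one_sub hvu2 hπu hsub))

theorem stmt10 {K : Type*} [Field K] {G : Type*} [CommGroup G] [LinearOrder G] [IsOrderedMonoid G]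
    {F : Type*} [Field F] (V : MulValuation K G) (π : K → F)
    (hres : V.IsResidue π)
    (hsqrt : ∀ x : K, x ≠ 0 → V.v x = 1 → π x = 1 → ∃ y : K, x = y ^ 2)
    (pan : K → F) (hpan : V.IsPseudoAngular π pan)
    (x₁ x₂ : K) (h1 : x₁ ≠ 0) (h2 : x₂ ≠ 0) (hv : V.v x₁ = V.v x₂) :
    (pan x₁ = pan x₂ →
      ∃ u : K, u ≠ 0 ∧ V.v u = 1 ∧ π (u ^ 2) = 1 ∧ x₂ = x₁ * u ^ 2) ∧
    (pan x₁ + pan x₂ = 0 → x₁ + x₂ = 0 ∨ V.v x₁ < V.v (x₁ + x₂)) :=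
  stmt10_general V π hres pan hpan x₁ x₂ h1 h2 hv
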